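/- arXiv:2512.23288 — 5 statements merged into one kernel-verified Lean document; each statement's English description precedes it below -/
import Mathlib

section
/- Let ν be a σ-finite Borel measure on 𝒪 with ∫_𝒪 |u|³ ν(du) < ∞, and let β ∈ (0,2). Assume that κ := limsup_{λ→∞} λ^{-β/3} ∫_𝒪 (1 - e^{-λ|u|³}) ν(du) satisfies 0 < κ < ∞. Then for every p ≥ 2 there exists a constant C > 0 such that for every ε ∈ (0,1), ∫_{{u ∈ 𝒪 : |u| ≤ ε}} |u|^p ν(du) ≤ C ε^{p-β}. -/
open MeasureTheory Set Filter
open scoped ENNReal Topology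

/-! Testing the functional at `λ = r⁻³` bounds it below by `(1 - e⁻¹) ν {r ≤ ‖u‖}`, so the
limsup hypothesis gives the tail bound `ν {r ≤ ‖u‖} ≤ K r^{-β}` for small `r`; by Markov's
inequality the finite third moment extends it to all `r ∈ (0, 1]`. The layer-cake formula
then gives `∫_{‖u‖ ≤ ε} ‖u‖^p dν ≤ p ∫_0^ε t^{p-1} ν {t ≤ ‖u‖} dt ≤ p K ∫_0^ε t^{p-1-β} dt`,
which is `p K ε^{p-β} / (p - β)`. -/

lemma lintegral_Ioc_ofReal_rpow_sub_one {q ε : ℝ} (hq : 0 < q) (hε : 0 ≤ ε) :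
    ∫⁻ t in Ioc 0 ε, ENNReal.ofReal (t ^ (q - 1)) = ENNReal.ofReal (ε ^ q / q) := by
  have hq' : -1 < q - 1 := by linarith
  have hint : IntegrableOn (fun t : ℝ => t ^ (q - 1)) (Ioc 0 ε) := by
    simpa [intervalIntegrable_iff, uIoc_of_le hε] using
      intervalIntegral.intervalIntegrable_rpow' (a := 0) (b := ε) hq'
  rw [← ofReal_integral_eq_lintegral_ofReal hint
    ((ae_restrict_mem measurableSet_Ioc).mono fun t ht => Real.rpow_nonneg ht.1.le _),
    ← intervalIntegral.integral_of_le hε, integral_rpow (Or.inl hq'), sub_add_cancel,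
    Real.zero_rpow hq.ne', sub_zero]

section TailBounds

variable {α : Type*} [MeasurableSpace α] {μ : Measure α} {s : Set α}

lemma mul_measure_inter_le_setLIntegral {F : α → ℝ≥0∞} (hF : AEMeasurable F (μ.restrict s))
    {a : ℝ≥0∞} {A : Set α} (hA : ∀ x ∈ A, a ≤ F x) :
    a * μ (s ∩ A) ≤ ∫⁻ x in s, F x ∂μ :=
  calc a * μ (s ∩ A) ≤ a * μ.restrict s {x | a ≤ F x} := by
        refine mul_le_mul_right ?_ a
        rw [inter_comm]
        exact (Measure.le_restrict_apply s A).trans (measure_mono hA)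
    _ ≤ ∫⁻ x in s, F x ∂μ := mul_meas_ge_le_lintegral₀ hF a

lemma measure_inter_le_lt_top_of_setLIntegral_lt_top {g : α → ℝ} (hg : Measurable g)
    (hmom : ∫⁻ x in s, ENNReal.ofReal (g x) ∂μ < ⊤) {t : ℝ} (ht : 0 < t) :
    μ (s ∩ {x | t ≤ g x}) < ⊤ := by
  have h := (mul_measure_inter_le_setLIntegral hg.ennreal_ofReal.aemeasurable
    (a := ENNReal.ofReal t) fun x (hx : t ≤ g x) => ENNReal.ofReal_le_ofReal hx).trans_lt hmom
  exact ENNReal.lt_top_of_mul_ne_top_right h.ne (ENNReal.ofReal_pos.2 ht).ne'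

lemma one_sub_exp_neg_one_mul_measure_le {g : α → ℝ} (hg : Measurable g) {t : ℝ} (ht : 0 < t) :
    ENNReal.ofReal (1 - Real.exp (-1)) * μ (s ∩ {x | t ≤ g x}) ≤
      ∫⁻ x in s, ENNReal.ofReal (1 - Real.exp (-(t⁻¹ * g x))) ∂μ := by
  refine mul_measure_inter_le_setLIntegral (by fun_prop) fun x (hx : t ≤ g x) => ?_
  have hscaled : 1 ≤ t⁻¹ * g x := by rwa [le_inv_mul_iff₀ ht, mul_one]
  gcongr

lemma eventually_measure_mul_rpow_le_of_limsup_lt {g : α → ℝ} (hg : Measurable g) {γ : ℝ}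
    {L : ℝ≥0∞} (hlim : limsup (fun lam : ℝ => ENNReal.ofReal (lam ^ (-γ)) *
      ∫⁻ x in s, ENNReal.ofReal (1 - Real.exp (-(lam * g x))) ∂μ) atTop < L) :
    ∀ᶠ t in 𝓝[>] 0, μ (s ∩ {x | t ≤ g x}) * ENNReal.ofReal (t ^ γ) ≤
      L / ENNReal.ofReal (1 - Real.exp (-1)) := by
  have hc : ENNReal.ofReal (1 - Real.exp (-1)) ≠ 0 := by simp
  -- at `λ = t⁻¹` the integrand is at least `1 - e⁻¹` on `{t ≤ g}`
  filter_upwards [tendsto_inv_nhdsGT_zero.eventually (eventually_lt_of_limsup_lt hlim),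
    self_mem_nhdsWithin] with t hlt (ht : 0 < t)
  rw [Real.inv_rpow ht.le, Real.rpow_neg (by positivity), inv_inv] at hlt
  rw [ENNReal.le_div_iff_mul_le (.inl hc) (.inl ENNReal.ofReal_ne_top)]
  calc μ (s ∩ {x | t ≤ g x}) * ENNReal.ofReal (t ^ γ) * ENNReal.ofReal (1 - Real.exp (-1))
      = ENNReal.ofReal (t ^ γ) * (ENNReal.ofReal (1 - Real.exp (-1)) * μ (s ∩ {x | t ≤ g x})) := by
        ring
    _ ≤ ENNReal.ofReal (t ^ γ) *
        ∫⁻ x in s, ENNReal.ofReal (1 - Real.exp (-(t⁻¹ * g x))) ∂μ :=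
      mul_le_mul_right (one_sub_exp_neg_one_mul_measure_le hg ht) _
    _ ≤ L := hlt.le

lemma exists_measure_mul_rpow_le_of_limsup_lt_top {g : α → ℝ} (hg : Measurable g) {γ : ℝ}
    (hγ : 0 ≤ γ) (hmom : ∫⁻ x in s, ENNReal.ofReal (g x) ∂μ < ⊤)
    (hlim : limsup (fun lam : ℝ => ENNReal.ofReal (lam ^ (-γ)) *
      ∫⁻ x in s, ENNReal.ofReal (1 - Real.exp (-(lam * g x))) ∂μ) atTop < ⊤) :
    ∃ K : ℝ, 0 < K ∧ ∀ t, 0 < t → t ≤ 1 →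
      μ (s ∩ {x | t ≤ g x}) * ENNReal.ofReal (t ^ γ) ≤ ENNReal.ofReal K := by
  set L := limsup (fun lam : ℝ => ENNReal.ofReal (lam ^ (-γ)) *
      ∫⁻ x in s, ENNReal.ofReal (1 - Real.exp (-(lam * g x))) ∂μ) atTop + 1
  obtain ⟨t₀, ht₀, hsmall⟩ := mem_nhdsGT_iff_exists_Ioo_subset.1
    (eventually_measure_mul_rpow_le_of_limsup_lt hg (ENNReal.lt_add_right hlim.ne one_ne_zero))
  set M := L / ENNReal.ofReal (1 - Real.exp (-1)) + μ (s ∩ {x | t₀ ≤ g x})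
  have hM : M ≠ ⊤ := ENNReal.add_ne_top.2
    ⟨ENNReal.div_ne_top (ENNReal.add_ne_top.2 ⟨hlim.ne, ENNReal.one_ne_top⟩) (by simp),
      (measure_inter_le_lt_top_of_setLIntegral_lt_top hg hmom ht₀).ne⟩
  refine ⟨M.toReal + 1, by positivity, fun t ht ht1 => le_trans ?_
    ((ENNReal.ofReal_toReal hM).symm.le.trans (ENNReal.ofReal_le_ofReal (by linarith)))⟩
  rcases lt_or_ge t t₀ with htt₀ | htt₀
  · exact (hsmall ⟨ht, htt₀⟩).trans le_self_add
  · calc μ (s ∩ {x | t ≤ g x}) * ENNReal.ofReal (t ^ γ) ≤ μ (s ∩ {x | t₀ ≤ g x}) * 1 :=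
          mul_le_mul' (measure_mono (inter_subset_inter_right s fun x hx => htt₀.trans hx))
            (ENNReal.ofReal_le_one.2 (Real.rpow_le_one ht.le ht1 hγ))
      _ ≤ M := (mul_one _).le.trans le_add_self

lemma measure_mul_rpow_le_of_pow {f : α → ℝ} (hf : ∀ x, 0 ≤ f x) {n : ℕ} (hn : n ≠ 0)
    {β : ℝ} {K : ℝ≥0∞} (h : ∀ t, 0 < t → t ≤ 1 →
      μ (s ∩ {x | t ≤ f x ^ n}) * ENNReal.ofReal (t ^ (β / n)) ≤ K) :
    ∀ r, 0 < r → r ≤ 1 → μ (s ∩ {x | r ≤ f x}) * ENNReal.ofReal (r ^ β) ≤ K := by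
  intro r hr hr1
  have hsets : {x | r ^ n ≤ f x ^ n} = {x | r ≤ f x} :=
    ext fun x => pow_le_pow_iff_left₀ hr.le (hf x) hn
  have hexp : (r ^ n) ^ (β / n) = r ^ β := by
    rw [← Real.rpow_natCast, ← Real.rpow_mul hr.le, mul_div_cancel₀ _ (Nat.cast_ne_zero.2 hn)]
  simpa only [hsets, hexp] using h (r ^ n) (by positivity) (pow_le_one₀ hr.le hr1)

lemma setLIntegral_rpow_le_of_measure_mul_rpow_le {f : α → ℝ} (hf : Measurable f)
    (hf0 : ∀ x, 0 ≤ f x) {β p K ε : ℝ} (hp : 0 < p) (hβp : β < p) (hK : 0 ≤ K)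
    (hε : 0 < ε) (hε1 : ε ≤ 1)
    (htail : ∀ r, 0 < r → r ≤ 1 →
      μ (s ∩ {x | r ≤ f x}) * ENNReal.ofReal (r ^ β) ≤ ENNReal.ofReal K) :
    ∫⁻ x in s ∩ {x | f x ≤ ε}, ENNReal.ofReal (f x ^ p) ∂μ ≤
      ENNReal.ofReal (p * K / (p - β) * ε ^ (p - β)) := by
  set A := s ∩ {x | f x ≤ ε}
  set φ : ℝ → ℝ≥0∞ := fun t => ENNReal.ofReal K * ENNReal.ofReal (t ^ (p - β - 1))
  have hlevel : ∀ t ∈ Ioi (0 : ℝ), μ.restrict A {x | t ≤ f x} * ENNReal.ofReal (t ^ (p - 1)) ≤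
      (Ioc 0 ε).indicator φ t := by
    intro t (ht : 0 < t)
    rw [Measure.restrict_apply (measurableSet_le measurable_const hf)]
    by_cases hte : t ≤ ε
    · rw [indicator_of_mem (show t ∈ Ioc 0 ε from ⟨ht, hte⟩)]
      have hsplit : t ^ (p - 1) = t ^ β * t ^ (p - β - 1) := by
        rw [← Real.rpow_add ht]; ring_nf
      calc μ ({x | t ≤ f x} ∩ A) * ENNReal.ofReal (t ^ (p - 1))
          ≤ μ (s ∩ {x | t ≤ f x}) * ENNReal.ofReal (t ^ β) * ENNReal.ofReal (t ^ (p - β - 1)) := by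
            rw [mul_assoc, ← ENNReal.ofReal_mul (by positivity), ← hsplit]
            have hsub : μ ({x | t ≤ f x} ∩ A) ≤ μ (s ∩ {x | t ≤ f x}) :=
              measure_mono fun x hx => ⟨hx.2.1, hx.1⟩
            exact mul_le_mul_left hsub _
        _ ≤ φ t := mul_le_mul_left (htail t ht (hte.trans hε1)) _
    · have hempty : {x | t ≤ f x} ∩ A = ∅ :=
        eq_empty_of_forall_notMem fun x hx => hte (hx.1.trans hx.2.2)
      simp [hempty, hte]
  calc ∫⁻ x in A, ENNReal.ofReal (f x ^ p) ∂μ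
      = ENNReal.ofReal p *
          ∫⁻ t in Ioi 0, μ.restrict A {x | t ≤ f x} * ENNReal.ofReal (t ^ (p - 1)) :=
        lintegral_rpow_eq_lintegral_meas_le_mul _ (ae_of_all _ hf0) hf.aemeasurable hp
    _ ≤ ENNReal.ofReal p * ∫⁻ t in Ioi 0, (Ioc 0 ε).indicator φ t :=
        mul_le_mul_right (setLIntegral_mono' measurableSet_Ioi hlevel) _
    _ = ENNReal.ofReal p * (ENNReal.ofReal K * ENNReal.ofReal (ε ^ (p - β) / (p - β))) := by
        rw [lintegral_indicator measurableSet_Ioc, Measure.restrict_restrict measurableSet_Ioc,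
          inter_eq_left.2 Ioc_subset_Ioi_self, lintegral_const_mul' _ _ ENNReal.ofReal_ne_top,
          lintegral_Ioc_ofReal_rpow_sub_one (by linarith) hε.le]
    _ = ENNReal.ofReal (p * K / (p - β) * ε ^ (p - β)) := by
        rw [← ENNReal.ofReal_mul hK, ← ENNReal.ofReal_mul hp.le]
        ring_nf

end TailBounds

theorem stmt_0_general (l : ℕ)
    (ν : Measure (EuclideanSpace ℝ (Fin l)))
    (hmom : (∫⁻ u in {u : EuclideanSpace ℝ (Fin l) | 0 < ‖u‖ ∧ ‖u‖ ≤ 1},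
        ENNReal.ofReal (‖u‖ ^ 3) ∂ν) < ⊤)
    (β : ℝ) (hβ : β ∈ Set.Ioo (0 : ℝ) 2) (κ : ENNReal)
    (hκdef : κ = Filter.limsup (fun lam : ℝ =>
        ENNReal.ofReal (lam ^ (-(β / 3))) *
          ∫⁻ u in {u : EuclideanSpace ℝ (Fin l) | 0 < ‖u‖ ∧ ‖u‖ ≤ 1},
            ENNReal.ofReal (1 - Real.exp (-(lam * ‖u‖ ^ 3))) ∂ν) Filter.atTop)
    (hκfin : κ < ⊤) :
    ∀ p : ℝ, 2 ≤ p → ∃ C : ℝ, 0 < C ∧ ∀ ε ∈ Set.Ioo (0 : ℝ) 1,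
      (∫⁻ u in {u : EuclideanSpace ℝ (Fin l) | (0 < ‖u‖ ∧ ‖u‖ ≤ 1) ∧ ‖u‖ ≤ ε},
        ENNReal.ofReal (‖u‖ ^ p) ∂ν) ≤ ENNReal.ofReal (C * ε ^ (p - β)) := by
  intro p hp
  obtain ⟨hβ0, hβ2⟩ := hβ
  obtain ⟨K, hK, htail⟩ := exists_measure_mul_rpow_le_of_limsup_lt_top
    (g := fun u => ‖u‖ ^ 3) (by fun_prop) (by positivity : 0 ≤ β / 3) hmom (hκdef ▸ hκfin)
  have htail_norm : ∀ r, 0 < r → r ≤ 1 →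
      ν ({u | 0 < ‖u‖ ∧ ‖u‖ ≤ 1} ∩ {u | r ≤ ‖u‖}) * ENNReal.ofReal (r ^ β) ≤ ENNReal.ofReal K :=
    measure_mul_rpow_le_of_pow norm_nonneg three_ne_zero
      (by simpa only [Nat.cast_ofNat] using htail)
  exact ⟨p * K / (p - β), div_pos (by positivity) (by linarith), fun ε hε =>
    setLIntegral_rpow_le_of_measure_mul_rpow_le measurable_norm norm_nonneg (by linarith)
      (by linarith) hK.le hε.1 hε.2.le htail_norm⟩

/-- Let `ν` be a σ-finite Borel measure on the punctured closed unit ball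
`𝒪 = {u : 0 < ‖u‖ ≤ 1}` of `ℝ^l` with finite third moment, and `β ∈ (0,2)`. If
`κ := limsup_{λ→∞} λ^{-β/3} ∫_𝒪 (1 - e^{-λ‖u‖³}) ν(du)` satisfies `0 < κ < ∞`, then for
every `p ≥ 2` there is `C > 0` with `∫_{‖u‖ ≤ ε} ‖u‖^p ν(du) ≤ C ε^{p-β}` for all `ε ∈ (0,1)`. -/
theorem stmt_0 (l : ℕ) (hl : 1 ≤ l)
    (ν : Measure (EuclideanSpace ℝ (Fin l))) [SigmaFinite ν]
    (hsupp : ν {u : EuclideanSpace ℝ (Fin l) | ¬ (0 < ‖u‖ ∧ ‖u‖ ≤ 1)} = 0)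
    (hmom : (∫⁻ u in {u : EuclideanSpace ℝ (Fin l) | 0 < ‖u‖ ∧ ‖u‖ ≤ 1},
        ENNReal.ofReal (‖u‖ ^ 3) ∂ν) < ⊤)
    (β : ℝ) (hβ : β ∈ Set.Ioo (0 : ℝ) 2) (κ : ENNReal)
    (hκdef : κ = Filter.limsup (fun lam : ℝ =>
        ENNReal.ofReal (lam ^ (-(β / 3))) *
          ∫⁻ u in {u : EuclideanSpace ℝ (Fin l) | 0 < ‖u‖ ∧ ‖u‖ ≤ 1},
            ENNReal.ofReal (1 - Real.exp (-(lam * ‖u‖ ^ 3))) ∂ν) Filter.atTop)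
    (hκpos : 0 < κ) (hκfin : κ < ⊤) :
    ∀ p : ℝ, 2 ≤ p → ∃ C : ℝ, 0 < C ∧ ∀ ε ∈ Set.Ioo (0 : ℝ) 1,
      (∫⁻ u in {u : EuclideanSpace ℝ (Fin l) | (0 < ‖u‖ ∧ ‖u‖ ≤ 1) ∧ ‖u‖ ≤ ε},
        ENNReal.ofReal (‖u‖ ^ p) ∂ν) ≤ ENNReal.ofReal (C * ε ^ (p - β)) :=
  stmt_0_general l ν hmom β hβ κ hκdef hκfin
end

section
/- Let ν be a σ-finite Borel measure on 𝒪, β ∈ (0,2), and C₁ > 0, and assume ∫_𝒪 (1 - e^{-λ|u|³}) ν(du) ≤ C₁ λ^{β/3} for every λ > 0. Then for every positive integer n, ∫_{{u ∈ 𝒪 : 2^{-n-1} < |u| ≤ 2^{-n}}} |u|² ν(du) ≤ 2 e C₁ · 2^{-n(2-β)}. -/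
/-!
On the annulus `a/2 < ‖u‖ ≤ a` put `λ = a⁻³`, so that `t = λ‖u‖³ ≤ 1`. Then `‖u‖² ≤ 2a²t` and
`t ≤ e · t e^{-t} ≤ e (1 - e^{-t})`, hence `‖u‖² ≤ 2e a² (1 - e^{-λ‖u‖³})`. Integrating over the
punctured unit ball and applying the hypothesis at this `λ` bounds the annulus integral by
`2e C₁ a² λ^{β/3} = 2e C₁ a^{2-β}`; the theorem is the case `a = 2^{-n}`.
-/

open MeasureTheory

namespace Real

lemma mul_exp_neg_le_one_sub_exp_neg (x : ℝ) : x * exp (-x) ≤ 1 - exp (-x) := by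
  have h : (x + 1) * exp (-x) ≤ 1 := by
    calc (x + 1) * exp (-x) ≤ exp x * exp (-x) :=
          mul_le_mul_of_nonneg_right (add_one_le_exp x) (exp_pos _).le
      _ = 1 := by rw [← exp_add, add_neg_cancel, exp_zero]
  linarith

lemma sq_le_two_mul_exp_one_mul_one_sub_exp_neg_pow_three {t : ℝ} (ht : 1 / 2 ≤ t) (ht1 : t ≤ 1) :
    t ^ 2 ≤ 2 * exp 1 * (1 - exp (-t ^ 3)) := by
  have ht3 : t ^ 3 ≤ 1 := pow_le_one₀ (by linarith) ht1
  calc t ^ 2 ≤ 2 * exp 1 * (t ^ 3 * exp (-1)) := by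
        rw [exp_neg, mul_left_comm, mul_assoc, mul_inv_cancel₀ (exp_pos 1).ne']
        nlinarith [sq_nonneg t]
    _ ≤ 2 * exp 1 * (t ^ 3 * exp (-t ^ 3)) := by gcongr
    _ ≤ 2 * exp 1 * (1 - exp (-t ^ 3)) := by gcongr; exact mul_exp_neg_le_one_sub_exp_neg _

end Real

lemma sq_le_two_mul_exp_one_mul_sq_mul_one_sub_exp_neg {a r : ℝ} (ha : 0 < a) (har : a / 2 ≤ r)
    (hra : r ≤ a) : r ^ 2 ≤ 2 * Real.exp 1 * a ^ 2 * (1 - Real.exp (-(a ^ (-3 : ℝ) * r ^ 3))) := by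
  have hscale : a ^ (-3 : ℝ) * r ^ 3 = (r / a) ^ 3 := by
    rw [Real.rpow_neg ha.le, div_pow, Real.rpow_ofNat, inv_mul_eq_div]
  have ht := Real.sq_le_two_mul_exp_one_mul_one_sub_exp_neg_pow_three (t := r / a)
    (by rwa [le_div_iff₀ ha, one_div_mul_eq_div]) (div_le_one_of_le₀ hra ha.le)
  calc r ^ 2 = a ^ 2 * (r / a) ^ 2 := by field_simp
    _ ≤ a ^ 2 * (2 * Real.exp 1 * (1 - Real.exp (-(r / a) ^ 3))) := by gcongr
    _ = _ := by rw [hscale]; ring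

section Annulus

variable {E : Type*} [NormedAddCommGroup E] [MeasurableSpace E] [OpensMeasurableSpace E]

lemma setLIntegral_annulus_norm_sq_le (ν : Measure E) {a : ℝ} (ha : 0 < a) (ha1 : a ≤ 1) :
    ∫⁻ u in {u : E | a / 2 < ‖u‖ ∧ ‖u‖ ≤ a}, ENNReal.ofReal (‖u‖ ^ 2) ∂ν ≤
      ENNReal.ofReal (2 * Real.exp 1 * a ^ 2) *
        ∫⁻ u in {u : E | 0 < ‖u‖ ∧ ‖u‖ ≤ 1},
          ENNReal.ofReal (1 - Real.exp (-(a ^ (-3 : ℝ) * ‖u‖ ^ 3))) ∂ν := by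
  rw [← lintegral_const_mul' _ _ ENNReal.ofReal_ne_top]
  calc _ ≤ ∫⁻ u in {u : E | a / 2 < ‖u‖ ∧ ‖u‖ ≤ a}, ENNReal.ofReal (2 * Real.exp 1 * a ^ 2) *
          ENNReal.ofReal (1 - Real.exp (-(a ^ (-3 : ℝ) * ‖u‖ ^ 3))) ∂ν := by
        refine setLIntegral_mono (by fun_prop) fun u ⟨hau, hua⟩ => ?_
        rw [← ENNReal.ofReal_mul (by positivity)]
        exact ENNReal.ofReal_le_ofReal
          (sq_le_two_mul_exp_one_mul_sq_mul_one_sub_exp_neg ha hau.le hua)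
    _ ≤ _ := lintegral_mono_set <| by
        rintro u ⟨hau, hua⟩
        exact ⟨by linarith, hua.trans ha1⟩

lemma setLIntegral_annulus_norm_sq_le_rpow (ν : Measure E) {β C₁ : ℝ}
    (hbound : ∀ lam : ℝ, 0 < lam →
      (∫⁻ u in {u : E | 0 < ‖u‖ ∧ ‖u‖ ≤ 1}, ENNReal.ofReal (1 - Real.exp (-(lam * ‖u‖ ^ 3))) ∂ν)
        ≤ ENNReal.ofReal (C₁ * lam ^ (β / 3)))
    {a : ℝ} (ha : 0 < a) (ha1 : a ≤ 1) :
    ∫⁻ u in {u : E | a / 2 < ‖u‖ ∧ ‖u‖ ≤ a}, ENNReal.ofReal (‖u‖ ^ 2) ∂ν ≤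
      ENNReal.ofReal (2 * Real.exp 1 * C₁ * a ^ (2 - β)) := by
  have hpow : a ^ 2 * (a ^ (-3 : ℝ)) ^ (β / 3) = a ^ (2 - β) := by
    rw [← Real.rpow_mul ha.le, ← Real.rpow_two, ← Real.rpow_add ha]
    ring_nf
  calc _ ≤ _ := setLIntegral_annulus_norm_sq_le ν ha ha1
    _ ≤ ENNReal.ofReal (2 * Real.exp 1 * a ^ 2) * ENNReal.ofReal (C₁ * (a ^ (-3 : ℝ)) ^ (β / 3)) :=
        mul_le_mul_right (hbound _ (by positivity)) _
    _ = _ := by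
        rw [← ENNReal.ofReal_mul (by positivity), ← hpow]
        ring_nf

end Annulus

theorem stmt_2_general (l : ℕ)
    (ν : Measure (EuclideanSpace ℝ (Fin l)))
    (β : ℝ) (C₁ : ℝ)
    (hbound : ∀ lam : ℝ, 0 < lam →
      (∫⁻ u in {u : EuclideanSpace ℝ (Fin l) | 0 < ‖u‖ ∧ ‖u‖ ≤ 1},
        ENNReal.ofReal (1 - Real.exp (-(lam * ‖u‖ ^ 3))) ∂ν)
        ≤ ENNReal.ofReal (C₁ * lam ^ (β / 3))) :
    ∀ n : ℕ, 1 ≤ n →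
      (∫⁻ u in {u : EuclideanSpace ℝ (Fin l) |
          (2 : ℝ) ^ (-(n : ℝ) - 1) < ‖u‖ ∧ ‖u‖ ≤ (2 : ℝ) ^ (-(n : ℝ))},
        ENNReal.ofReal (‖u‖ ^ 2) ∂ν)
        ≤ ENNReal.ofReal (2 * Real.exp 1 * C₁ * (2 : ℝ) ^ (-(n : ℝ) * (2 - β))) := by
  intro n _
  have hhalf : (2 : ℝ) ^ (-(n : ℝ) - 1) = (2 : ℝ) ^ (-(n : ℝ)) / 2 := by
    rw [Real.rpow_sub_one two_ne_zero]
  rw [hhalf, Real.rpow_mul zero_le_two]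
  exact setLIntegral_annulus_norm_sq_le_rpow ν hbound (by positivity)
    (Real.rpow_le_one_of_one_le_of_nonpos one_le_two (by simp))

/-- If `ν` is a σ-finite measure on `𝒪`, `β ∈ (0,2)` and `C₁ > 0` with
`∫_𝒪 (1 - e^{-λ‖u‖³}) ν(du) ≤ C₁ λ^{β/3}` for every `λ > 0`, then for every positive
integer `n`, `∫_{2^{-n-1} < ‖u‖ ≤ 2^{-n}} ‖u‖² ν(du) ≤ 2 e C₁ · 2^{-n(2-β)}`. -/
theorem stmt_2 (l : ℕ) (hl : 1 ≤ l)
    (ν : Measure (EuclideanSpace ℝ (Fin l))) [SigmaFinite ν]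
    (hsupp : ν {u : EuclideanSpace ℝ (Fin l) | ¬ (0 < ‖u‖ ∧ ‖u‖ ≤ 1)} = 0)
    (β : ℝ) (hβ : β ∈ Set.Ioo (0 : ℝ) 2) (C₁ : ℝ) (hC₁ : 0 < C₁)
    (hbound : ∀ lam : ℝ, 0 < lam →
      (∫⁻ u in {u : EuclideanSpace ℝ (Fin l) | 0 < ‖u‖ ∧ ‖u‖ ≤ 1},
        ENNReal.ofReal (1 - Real.exp (-(lam * ‖u‖ ^ 3))) ∂ν)
        ≤ ENNReal.ofReal (C₁ * lam ^ (β / 3))) :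
    ∀ n : ℕ, 1 ≤ n →
      (∫⁻ u in {u : EuclideanSpace ℝ (Fin l) |
          (2 : ℝ) ^ (-(n : ℝ) - 1) < ‖u‖ ∧ ‖u‖ ≤ (2 : ℝ) ^ (-(n : ℝ))},
        ENNReal.ofReal (‖u‖ ^ 2) ∂ν)
        ≤ ENNReal.ofReal (2 * Real.exp 1 * C₁ * (2 : ℝ) ^ (-(n : ℝ) * (2 - β))) :=
  stmt_2_general l ν β C₁ hbound
end

section
/- Let ν be a σ-finite Borel measure on 𝒪, β ∈ (0,2), and C₁ > 0, and assume ∫_𝒪 (1 - e^{-λ|u|³}) ν(du) ≤ C₁ λ^{β/3} for every λ > 0. Then there exists a constant C > 0 such that for every ε ∈ (0,1], ∫_{{u ∈ 𝒪 : |u| ≤ ε}} |u|² ν(du) ≤ C ε^{2-β}. -/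
/-!
Testing the hypothesis at `λ = r⁻³`, where `1 - e^{-λ‖u‖³} ≥ 1 - e⁻¹` on `{r < ‖u‖}`, Markov's
inequality gives the tail bound `ν {r < ‖u‖} ≤ D r^{-β}`. On the shell `{a < ‖u‖ ≤ 2a}` this bounds
`∫ ‖u‖² dν` by `4 D a^{2-β}`, and summing over the shells `a = ε 2^{-(k+1)}` that cover
`{0 < ‖u‖ ≤ ε}` is a geometric series of ratio `2^{-(2-β)} < 1`.
-/

open MeasureTheory Set

section

variable {E : Type*} [NormedAddCommGroup E] [MeasurableSpace E]
  {μ : Measure E} {β C₁ D : ℝ}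

theorem measure_norm_gt_le_of_lintegral_one_sub_exp_le [OpensMeasurableSpace E]
    (hbound : ∀ lam : ℝ, 0 < lam →
      ∫⁻ u, ENNReal.ofReal (1 - Real.exp (-(lam * ‖u‖ ^ 3))) ∂μ
        ≤ ENNReal.ofReal (C₁ * lam ^ (β / 3)))
    {r : ℝ} (hr : 0 < r) :
    μ {u | r < ‖u‖} ≤ ENNReal.ofReal (C₁ / (1 - Real.exp (-1)) * r⁻¹ ^ β) := by
  have hc : 0 < 1 - Real.exp (-1) := by
    have := Real.exp_lt_one_iff.mpr (show (-1 : ℝ) < 0 by norm_num)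
    linarith
  have hlam : (r⁻¹ ^ 3) ^ (β / 3) = r⁻¹ ^ β := by
    rw [← Real.rpow_natCast, ← Real.rpow_mul (by positivity)]
    ring_nf
  have hsub : {u : E | r < ‖u‖} ⊆ {u | ENNReal.ofReal (1 - Real.exp (-1))
      ≤ ENNReal.ofReal (1 - Real.exp (-(r⁻¹ ^ 3 * ‖u‖ ^ 3)))} := by
    intro u (hu : r < ‖u‖)
    have h1 : 1 < r⁻¹ ^ 3 * ‖u‖ ^ 3 := by
      rw [← mul_pow]
      exact one_lt_pow₀ ((one_lt_inv_mul₀ hr).mpr hu) (by norm_num)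
    have := Real.exp_lt_exp.mpr (neg_lt_neg h1)
    exact ENNReal.ofReal_le_ofReal (by linarith)
  calc μ {u | r < ‖u‖}
      ≤ (∫⁻ u, ENNReal.ofReal (1 - Real.exp (-(r⁻¹ ^ 3 * ‖u‖ ^ 3))) ∂μ)
          / ENNReal.ofReal (1 - Real.exp (-1)) :=
        (measure_mono hsub).trans (meas_ge_le_lintegral_div (by fun_prop)
          (ENNReal.ofReal_pos.mpr hc).ne' ENNReal.ofReal_ne_top)
    _ ≤ ENNReal.ofReal (C₁ * r⁻¹ ^ β) / ENNReal.ofReal (1 - Real.exp (-1)) := by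
        gcongr
        rw [← hlam]
        exact hbound _ (by positivity)
    _ = ENNReal.ofReal (C₁ / (1 - Real.exp (-1)) * r⁻¹ ^ β) := by
        rw [← ENNReal.ofReal_div_of_pos hc, div_mul_eq_mul_div]

theorem setLIntegral_norm_sq_shell_le {a : ℝ} (ha : 0 < a)
    (htail : μ {u | a < ‖u‖} ≤ ENNReal.ofReal (D * a⁻¹ ^ β)) :
    ∫⁻ u in {u | a < ‖u‖ ∧ ‖u‖ ≤ 2 * a}, ENNReal.ofReal (‖u‖ ^ 2) ∂μ
      ≤ ENNReal.ofReal (4 * D * a ^ (2 - β)) := by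
  calc ∫⁻ u in {u | a < ‖u‖ ∧ ‖u‖ ≤ 2 * a}, ENNReal.ofReal (‖u‖ ^ 2) ∂μ
      ≤ ∫⁻ _ in {u | a < ‖u‖ ∧ ‖u‖ ≤ 2 * a}, ENNReal.ofReal ((2 * a) ^ 2) ∂μ := by
        refine setLIntegral_mono (by fun_prop) fun u hu => ENNReal.ofReal_le_ofReal ?_
        exact pow_le_pow_left₀ (norm_nonneg u) hu.2 2
    _ ≤ ENNReal.ofReal ((2 * a) ^ 2) * ENNReal.ofReal (D * a⁻¹ ^ β) := by
        rw [setLIntegral_const]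
        gcongr
        exact (measure_mono fun u hu => hu.1).trans htail
    _ = ENNReal.ofReal (4 * D * a ^ (2 - β)) := by
        rw [← ENNReal.ofReal_mul (by positivity), Real.inv_rpow ha.le,
          Real.rpow_sub ha, Real.rpow_two]
        congr 1
        ring

theorem exists_mul_half_pow_lt_le {t ε : ℝ} (ht : 0 < t) (htε : t ≤ ε) :
    ∃ k : ℕ, ε * (1 / 2) ^ (k + 1) < t ∧ t ≤ 2 * (ε * (1 / 2) ^ (k + 1)) := by
  have hε : 0 < ε := ht.trans_le htε
  obtain ⟨k, hlt, hle⟩ := exists_nat_pow_near_of_lt_one (div_pos ht hε)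
    ((div_le_one hε).mpr htε) (by norm_num : (0 : ℝ) < 1 / 2) (by norm_num)
  refine ⟨k, ?_, ?_⟩
  · rwa [lt_div_iff₀ hε, mul_comm] at hlt
  · rw [div_le_iff₀ hε] at hle
    rw [pow_succ]
    linarith

theorem setLIntegral_norm_sq_le_of_measure_norm_gt_le (hD : 0 ≤ D) (hβ : β < 2)
    (htail : ∀ r : ℝ, 0 < r → μ {u | r < ‖u‖} ≤ ENNReal.ofReal (D * r⁻¹ ^ β))
    {ε : ℝ} (hε : 0 < ε) :
    ∫⁻ u in {u | 0 < ‖u‖ ∧ ‖u‖ ≤ ε}, ENNReal.ofReal (‖u‖ ^ 2) ∂μ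
      ≤ ENNReal.ofReal (4 * D * (1 / 2) ^ (2 - β) / (1 - (1 / 2) ^ (2 - β)) * ε ^ (2 - β)) := by
  set q : ℝ := (1 / 2) ^ (2 - β)
  have hq0 : 0 ≤ q := by positivity
  have hq1 : q < 1 := Real.rpow_lt_one (by norm_num) (by norm_num) (by linarith)
  set a : ℕ → ℝ := fun k => ε * (1 / 2) ^ (k + 1)
  have ha : ∀ k, 0 < a k := fun k => by positivity
  have hcover : {u : E | 0 < ‖u‖ ∧ ‖u‖ ≤ ε} ⊆ ⋃ k, {u | a k < ‖u‖ ∧ ‖u‖ ≤ 2 * a k} :=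
    fun u hu => mem_iUnion.mpr (exists_mul_half_pow_lt_le hu.1 hu.2)
  have hterm : ∀ k, 4 * D * a k ^ (2 - β) = 4 * D * q * ε ^ (2 - β) * q ^ k := fun k => by
    rw [Real.mul_rpow hε.le (by positivity), ← Real.rpow_pow_comm (by norm_num), pow_succ]
    ring
  have hsum := (hasSum_geometric_of_lt_one hq0 hq1).mul_left (4 * D * q * ε ^ (2 - β))
  calc ∫⁻ u in {u | 0 < ‖u‖ ∧ ‖u‖ ≤ ε}, ENNReal.ofReal (‖u‖ ^ 2) ∂μ
      ≤ ∑' k, ∫⁻ u in {u | a k < ‖u‖ ∧ ‖u‖ ≤ 2 * a k}, ENNReal.ofReal (‖u‖ ^ 2) ∂μ :=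
        (lintegral_mono_set hcover).trans (lintegral_iUnion_le _ _)
    _ ≤ ∑' k, ENNReal.ofReal (4 * D * q * ε ^ (2 - β) * q ^ k) := by
        refine ENNReal.tsum_le_tsum fun k => ?_
        rw [← hterm]
        exact setLIntegral_norm_sq_shell_le (ha k) (htail _ (ha k))
    _ = ENNReal.ofReal (4 * D * q / (1 - q) * ε ^ (2 - β)) := by
        rw [← ENNReal.ofReal_tsum_of_nonneg (fun k => by positivity) hsum.summable,
          hsum.tsum_eq]
        ring_nf

end

theorem stmt_3_general (l : ℕ)
    (ν : Measure (EuclideanSpace ℝ (Fin l)))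
    (β : ℝ) (hβ : β ∈ Set.Ioo (0 : ℝ) 2) (C₁ : ℝ) (hC₁ : 0 < C₁)
    (hbound : ∀ lam : ℝ, 0 < lam →
      (∫⁻ u in {u : EuclideanSpace ℝ (Fin l) | 0 < ‖u‖ ∧ ‖u‖ ≤ 1},
        ENNReal.ofReal (1 - Real.exp (-(lam * ‖u‖ ^ 3))) ∂ν)
        ≤ ENNReal.ofReal (C₁ * lam ^ (β / 3))) :
    ∃ C : ℝ, 0 < C ∧ ∀ ε ∈ Set.Ioc (0 : ℝ) 1,
      (∫⁻ u in {u : EuclideanSpace ℝ (Fin l) | (0 < ‖u‖ ∧ ‖u‖ ≤ 1) ∧ ‖u‖ ≤ ε},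
        ENNReal.ofReal (‖u‖ ^ 2) ∂ν) ≤ ENNReal.ofReal (C * ε ^ (2 - β)) := by
  set S := {u : EuclideanSpace ℝ (Fin l) | 0 < ‖u‖ ∧ ‖u‖ ≤ 1}
  set D := C₁ / (1 - Real.exp (-1))
  set q : ℝ := (1 / 2) ^ (2 - β)
  have hD : 0 < D := div_pos hC₁ (by simp [Real.exp_lt_one_iff])
  have hq : q < 1 := Real.rpow_lt_one (by norm_num) (by norm_num) (by linarith [hβ.2])
  refine ⟨4 * D * q / (1 - q), by positivity, fun ε hε => ?_⟩
  have hset : {u : EuclideanSpace ℝ (Fin l) | (0 < ‖u‖ ∧ ‖u‖ ≤ 1) ∧ ‖u‖ ≤ ε}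
      = {u | 0 < ‖u‖ ∧ ‖u‖ ≤ ε} ∩ S := by
    ext u; simp only [S, mem_ofPred_eq, mem_inter_iff]; tauto
  rw [hset, ← Measure.restrict_restrict (by measurability)]
  exact setLIntegral_norm_sq_le_of_measure_norm_gt_le hD.le hβ.2
    (fun r hr => measure_norm_gt_le_of_lintegral_one_sub_exp_le hbound hr) hε.1

/-- If `ν` is a σ-finite measure on `𝒪`, `β ∈ (0,2)` and `C₁ > 0` with
`∫_𝒪 (1 - e^{-λ‖u‖³}) ν(du) ≤ C₁ λ^{β/3}` for every `λ > 0`, then there is `C > 0` with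
`∫_{‖u‖ ≤ ε} ‖u‖² ν(du) ≤ C ε^{2-β}` for every `ε ∈ (0,1]`. -/
theorem stmt_3 (l : ℕ) (hl : 1 ≤ l)
    (ν : Measure (EuclideanSpace ℝ (Fin l))) [SigmaFinite ν]
    (hsupp : ν {u : EuclideanSpace ℝ (Fin l) | ¬ (0 < ‖u‖ ∧ ‖u‖ ≤ 1)} = 0)
    (β : ℝ) (hβ : β ∈ Set.Ioo (0 : ℝ) 2) (C₁ : ℝ) (hC₁ : 0 < C₁)
    (hbound : ∀ lam : ℝ, 0 < lam →
      (∫⁻ u in {u : EuclideanSpace ℝ (Fin l) | 0 < ‖u‖ ∧ ‖u‖ ≤ 1},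
        ENNReal.ofReal (1 - Real.exp (-(lam * ‖u‖ ^ 3))) ∂ν)
        ≤ ENNReal.ofReal (C₁ * lam ^ (β / 3))) :
    ∃ C : ℝ, 0 < C ∧ ∀ ε ∈ Set.Ioc (0 : ℝ) 1,
      (∫⁻ u in {u : EuclideanSpace ℝ (Fin l) | (0 < ‖u‖ ∧ ‖u‖ ≤ 1) ∧ ‖u‖ ≤ ε},
        ENNReal.ofReal (‖u‖ ^ 2) ∂ν) ≤ ENNReal.ofReal (C * ε ^ (2 - β)) :=
  stmt_3_general l ν β hβ C₁ hC₁ hbound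
end

section
/- Let ν be a σ-finite Borel measure on 𝒪, β ∈ (0,2), and κ, λ₀, C_L > 0. Assume (i) ∫_𝒪 (1 - e^{-λ|u|³}) ν(du) ≥ (κ/2) λ^{β/3} for all λ > λ₀, and (ii) ν({u ∈ 𝒪 : |u| > ε}) ≤ C_L ε^{-β} for all ε ∈ (0,1). Then there exists a constant c > 0 such that ∫_{{u ∈ 𝒪 : |u| ≤ ε}} |u|³ ν(du) ≥ c ε^{3-β} for every ε ∈ (0,1). -/
open MeasureTheory Set Filter

/-!
Split `{|u| ≤ 1}` at radius `ε`. On `{|u| ≤ ε}` use `1 - e^{-x} ≤ x`, on `{|u| > ε}` bound the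
integrand by `1` and use the tail bound. At `λ = M ε^{-3}` with `M` large the tail contribution
`C_L ε^{-β}` is at most half of the lower bound `(κ/2) λ^{β/3} = (κ/2) M^{β/3} ε^{-β}`, so
`λ ∫_{|u| ≤ ε} |u|³ ≥ (κ/4) λ^{β/3}`, which is `c ε^{3-β}` after dividing by `λ`.
-/

lemma ENNReal.ofReal_one_sub_exp_neg_mul_le {lam : ℝ} (hlam : 0 ≤ lam) (t : ℝ) :
    ENNReal.ofReal (1 - Real.exp (-(lam * t))) ≤ ENNReal.ofReal lam * ENNReal.ofReal t := by
  rw [← ENNReal.ofReal_mul hlam]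
  exact ENNReal.ofReal_le_ofReal (by linarith [Real.one_sub_le_exp_neg (lam * t)])

lemma ENNReal.ofReal_one_sub_exp_neg_le_one (x : ℝ) : ENNReal.ofReal (1 - Real.exp (-x)) ≤ 1 :=
  ENNReal.ofReal_le_one.mpr (by linarith [Real.exp_pos (-x)])

theorem setLIntegral_one_sub_exp_neg_mul_le {α : Type*} [MeasurableSpace α] (ν : Measure α)
    (S : Set α) {B : Set α} (hB : MeasurableSet B) (h : α → ℝ) {lam : ℝ} (hlam : 0 ≤ lam) :
    ∫⁻ u in S, ENNReal.ofReal (1 - Real.exp (-(lam * h u))) ∂ν ≤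
      ENNReal.ofReal lam * ∫⁻ u in S ∩ B, ENNReal.ofReal (h u) ∂ν + ν (S \ B) := by
  rw [← lintegral_inter_add_sdiff _ S hB, ← lintegral_const_mul' _ _ ENNReal.ofReal_ne_top,
    ← setLIntegral_one]
  gcongr with u
  · exact ENNReal.ofReal_one_sub_exp_neg_mul_le hlam _
  · exact ENNReal.ofReal_one_sub_exp_neg_le_one _

lemma mul_rpow_neg_rpow_div {p : ℝ} (hp : p ≠ 0) (β : ℝ) {M ε : ℝ} (hM : 0 ≤ M) (hε : 0 < ε) :
    (M * ε ^ (-p)) ^ (β / p) = M ^ (β / p) * ε ^ (-β) := by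
  rw [Real.mul_rpow hM (Real.rpow_nonneg hε.le _), ← Real.rpow_mul hε.le]
  field_simp

lemma mul_rpow_neg_mul_rpow_sub (p β : ℝ) {M ε : ℝ} (hM : 0 < M) (hε : 0 < ε) :
    M * ε ^ (-p) * (M ^ (β / p - 1) * ε ^ (p - β)) = M ^ (β / p) * ε ^ (-β) := by
  rw [mul_mul_mul_comm, Real.rpow_sub_one hM.ne', mul_div_cancel₀ _ hM.ne', ← Real.rpow_add hε]
  ring_nf

theorem stmt_7_general (l : ℕ)
    (ν : Measure (EuclideanSpace ℝ (Fin l)))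
    (β : ℝ) (hβ : β ∈ Set.Ioo (0 : ℝ) 2)
    (κ lam₀ CL : ℝ) (hκ : 0 < κ)
    (hlower : ∀ lam : ℝ, lam₀ < lam →
      ENNReal.ofReal (κ / 2 * lam ^ (β / 3)) ≤
        ∫⁻ u in {u : EuclideanSpace ℝ (Fin l) | 0 < ‖u‖ ∧ ‖u‖ ≤ 1},
          ENNReal.ofReal (1 - Real.exp (-(lam * ‖u‖ ^ 3))) ∂ν)
    (htail : ∀ ε ∈ Set.Ioo (0 : ℝ) 1,
      ν {u : EuclideanSpace ℝ (Fin l) | (0 < ‖u‖ ∧ ‖u‖ ≤ 1) ∧ ε < ‖u‖}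
        ≤ ENNReal.ofReal (CL * ε ^ (-β))) :
    ∃ c : ℝ, 0 < c ∧ ∀ ε ∈ Set.Ioo (0 : ℝ) 1,
      ENNReal.ofReal (c * ε ^ (3 - β)) ≤
        ∫⁻ u in {u : EuclideanSpace ℝ (Fin l) | (0 < ‖u‖ ∧ ‖u‖ ≤ 1) ∧ ‖u‖ ≤ ε},
          ENNReal.ofReal (‖u‖ ^ 3) ∂ν := by
  obtain ⟨M, hM, hMlam₀, hMCL⟩ : ∃ M : ℝ, 0 < M ∧ lam₀ < M ∧ 4 * CL / κ ≤ M ^ (β / 3) :=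
    ((eventually_gt_atTop 0).and ((eventually_gt_atTop lam₀).and
      ((tendsto_rpow_atTop (by linarith [hβ.1])).eventually_ge_atTop _))).exists
  refine ⟨κ / 4 * M ^ (β / 3 - 1), by positivity, fun ε hε => ?_⟩
  set lam := M * ε ^ (-3 : ℝ)
  have hlam : 0 < lam := by have := Real.rpow_pos_of_pos hε.1 (-3); positivity
  have hlam_gt : lam₀ < lam := hMlam₀.trans_le <| le_mul_of_one_le_right hM.le <|
    Real.one_le_rpow_of_pos_of_le_one_of_nonpos hε.1 hε.2.le (by norm_num)
  have hscale : κ / 4 * lam ^ (β / 3) = lam * (κ / 4 * M ^ (β / 3 - 1) * ε ^ (3 - β)) := by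
    rw [mul_rpow_neg_rpow_div three_ne_zero β hM.le hε.1,
      ← mul_rpow_neg_mul_rpow_sub 3 β hM hε.1]
    ring
  have htail' : ν ({u : EuclideanSpace ℝ (Fin l) | 0 < ‖u‖ ∧ ‖u‖ ≤ 1} \ {u | ‖u‖ ≤ ε}) ≤
      ENNReal.ofReal (κ / 4 * lam ^ (β / 3)) := by
    refine (le_of_eq (congrArg ν ?_)).trans ((htail ε hε).trans (ENNReal.ofReal_le_ofReal ?_))
    · ext u; simp [not_le]
    · rw [mul_rpow_neg_rpow_div three_ne_zero β hM.le hε.1]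
      have := Real.rpow_pos_of_pos hε.1 (-β)
      rw [div_le_iff₀ hκ] at hMCL
      nlinarith
  have key := (hlower lam hlam_gt).trans <|
    (setLIntegral_one_sub_exp_neg_mul_le ν _ (measurableSet_le continuous_norm.measurable
      measurable_const) (‖·‖ ^ 3) hlam.le).trans (add_le_add_right htail' _)
  rw [show κ / 2 * lam ^ (β / 3) = κ / 4 * lam ^ (β / 3) + κ / 4 * lam ^ (β / 3) by ring,
    ENNReal.ofReal_add (by positivity) (by positivity),
    ENNReal.add_le_add_iff_right ENNReal.ofReal_ne_top, hscale,
    ENNReal.ofReal_mul hlam.le] at key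
  exact (ENNReal.mul_le_mul_iff_right (ENNReal.ofReal_pos.mpr hlam).ne' ENNReal.ofReal_ne_top).mp key

/-- Let `ν` be a σ-finite measure on `𝒪`, `β ∈ (0,2)`, `κ, λ₀, C_L > 0`.
Assume (i) `∫_𝒪 (1 - e^{-λ‖u‖³}) ν(du) ≥ (κ/2) λ^{β/3}` for all `λ > λ₀` and (ii)
`ν({‖u‖ > ε}) ≤ C_L ε^{-β}` for all `ε ∈ (0,1)`. Then there is `c > 0` with
`∫_{‖u‖ ≤ ε} ‖u‖³ ν(du) ≥ c ε^{3-β}` for every `ε ∈ (0,1)`. -/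
theorem stmt_7 (l : ℕ) (hl : 1 ≤ l)
    (ν : Measure (EuclideanSpace ℝ (Fin l))) [SigmaFinite ν]
    (hsupp : ν {u : EuclideanSpace ℝ (Fin l) | ¬ (0 < ‖u‖ ∧ ‖u‖ ≤ 1)} = 0)
    (β : ℝ) (hβ : β ∈ Set.Ioo (0 : ℝ) 2)
    (κ lam₀ CL : ℝ) (hκ : 0 < κ) (hlam₀ : 0 < lam₀) (hCL : 0 < CL)
    (hlower : ∀ lam : ℝ, lam₀ < lam →
      ENNReal.ofReal (κ / 2 * lam ^ (β / 3)) ≤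
        ∫⁻ u in {u : EuclideanSpace ℝ (Fin l) | 0 < ‖u‖ ∧ ‖u‖ ≤ 1},
          ENNReal.ofReal (1 - Real.exp (-(lam * ‖u‖ ^ 3))) ∂ν)
    (htail : ∀ ε ∈ Set.Ioo (0 : ℝ) 1,
      ν {u : EuclideanSpace ℝ (Fin l) | (0 < ‖u‖ ∧ ‖u‖ ≤ 1) ∧ ε < ‖u‖}
        ≤ ENNReal.ofReal (CL * ε ^ (-β))) :
    ∃ c : ℝ, 0 < c ∧ ∀ ε ∈ Set.Ioo (0 : ℝ) 1,
      ENNReal.ofReal (c * ε ^ (3 - β)) ≤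
        ∫⁻ u in {u : EuclideanSpace ℝ (Fin l) | (0 < ‖u‖ ∧ ‖u‖ ≤ 1) ∧ ‖u‖ ≤ ε},
          ENNReal.ofReal (‖u‖ ^ 3) ∂ν :=
  stmt_7_general l ν β hβ κ lam₀ CL hκ hlower htail
end

section
/- Let ν be a σ-finite Borel measure on 𝒪 with ∫_𝒪 |u|³ ν(du) < ∞, β ∈ (0,2), and κ, λ₀, C_L > 0. Assume (i) ∫_𝒪 (1 - e^{-λ|u|³}) ν(du) ≥ (κ/2) λ^{β/3} for all λ > λ₀, and (ii) ν({u ∈ 𝒪 : |u| > ε}) ≤ C_L ε^{-β} for all ε ∈ (0,1). Then for every p ≥ 1 there exists a constant C > 0 such that for all s > 0 and all ε ∈ (0,1), ∫_0^∞ λ^{p-1} exp{ -s ∫_{{u ∈ 𝒪 : |u| ≤ ε}} (1 - e^{-λ|u|³}) ν(du) } dλ ≤ C ( (s ε^{3-β})^{-p} + s^{-3p/β} ). -/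
/-!
Write `ψ(λ) = ∫_{|u| ≤ ε} (1 - e^{-λ|u|³}) ν(du)` and `Λ = M ε⁻³` with `M` large. For `λ ≥ Λ`,
hypothesis (i) bounds the whole exponent below by `(κ/2) λ^{β/3}`, of which the jumps larger than
`ε` contribute at most `ν(|u| > ε) ≤ C_L ε^{-β} ≤ (κ/4) Λ^{β/3}`; so `ψ(λ) ≥ (κ/4) λ^{β/3}`.
For `λ ≤ Λ`, concavity of `λ ↦ 1 - e^{-λt}` gives `ψ(λ) ≥ (λ/Λ) ψ(Λ) ≥ (κ/4) M^{β/3-1} ε^{3-β} λ`.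
Hence `λ^{p-1} e^{-sψ(λ)}` is dominated by `λ^{p-1} (e^{-c s ε^{3-β} λ} + e^{-(κ/4) s λ^{β/3}})`
with `c = (κ/4) M^{β/3-1}`, and these two Gamma integrals are of order `(s ε^{3-β})^{-p}` and
`s^{-3p/β}`.
-/

open MeasureTheory Set Filter

/-- Exponential of the negative of an extended-nonnegative real, with `expNeg ∞ = 0`. -/
noncomputable def expNeg (x : ENNReal) : ENNReal :=
  if x = ⊤ then 0 else ENNReal.ofReal (Real.exp (-x.toReal))

open scoped ENNReal

lemma expNeg_le_of_ofReal_le {c : ℝ} {x : ℝ≥0∞} (h : ENNReal.ofReal c ≤ x) :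
    expNeg x ≤ ENNReal.ofReal (Real.exp (-c)) := by
  unfold expNeg
  split_ifs with hx
  · exact zero_le
  · refine ENNReal.ofReal_le_ofReal (Real.exp_le_exp.2 (neg_le_neg ?_))
    rcases le_or_gt c 0 with hc | hc
    · exact hc.trans ENNReal.toReal_nonneg
    · exact (ENNReal.ofReal_le_iff_le_toReal hx).1 h

lemma mul_one_sub_exp_neg_le {θ : ℝ} (hθ0 : 0 ≤ θ) (hθ1 : θ ≤ 1) (t : ℝ) :
    θ * (1 - Real.exp (-t)) ≤ 1 - Real.exp (-(θ * t)) := by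
  have h := convexOn_exp.2 (mem_univ (-t)) (mem_univ 0) hθ0 (sub_nonneg.2 hθ1) (by ring)
  simp only [smul_eq_mul, mul_zero, add_zero, Real.exp_zero, mul_one, mul_neg] at h
  linarith

lemma exists_gt_and_le_mul_rpow (a C : ℝ) {c r : ℝ} (hc : 0 < c) (hr : 0 < r) :
    ∃ M : ℝ, 0 < M ∧ a < M ∧ C ≤ c * M ^ r := by
  obtain ⟨M, hM, hMC⟩ := ((eventually_gt_atTop (max a 0)).and
    (((tendsto_rpow_atTop hr).const_mul_atTop hc).eventually_ge_atTop C)).exists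
  exact ⟨M, (le_max_right a 0).trans_lt hM, (le_max_left a 0).trans_lt hM, hMC⟩

lemma lintegral_rpow_sub_one_mul_exp_neg_mul_rpow {p r b : ℝ} (hp : 0 < p) (hr : 0 < r)
    (hb : 0 < b) :
    ∫⁻ x in Ioi (0 : ℝ), ENNReal.ofReal (x ^ (p - 1) * Real.exp (-b * x ^ r)) =
      ENNReal.ofReal (b ^ (-(p / r)) * (1 / r) * Real.Gamma (p / r)) := by
  have hq : -1 < p - 1 := by linarith
  have hnonneg : 0 ≤ᵐ[volume.restrict (Ioi 0)] fun x : ℝ => x ^ (p - 1) * Real.exp (-b * x ^ r) :=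
    (ae_restrict_iff' measurableSet_Ioi).2 (ae_of_all _ fun x (hx : 0 < x) => by positivity)
  rw [← ofReal_integral_eq_lintegral_ofReal (integrableOn_rpow_mul_exp_neg_mul_rpow hq hr hb)
    hnonneg, integral_rpow_mul_exp_neg_mul_rpow hr hq hb, sub_add_cancel, neg_div]

lemma lintegral_rpow_mul_expNeg_le {ψ : ℝ → ℝ≥0∞} {p s a b r₁ r₂ : ℝ} (hp : 0 < p) (hs : 0 < s)
    (ha : 0 < a) (hb : 0 < b) (hr₁ : 0 < r₁) (hr₂ : 0 < r₂)
    (hψ : ∀ lam > 0,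
      ENNReal.ofReal (a * lam ^ r₁) ≤ ψ lam ∨ ENNReal.ofReal (b * lam ^ r₂) ≤ ψ lam) :
    ∫⁻ lam in Ioi (0 : ℝ), ENNReal.ofReal (lam ^ (p - 1)) * expNeg (ENNReal.ofReal s * ψ lam) ≤
      ENNReal.ofReal ((s * a) ^ (-(p / r₁)) * (1 / r₁) * Real.Gamma (p / r₁) +
        (s * b) ^ (-(p / r₂)) * (1 / r₂) * Real.Gamma (p / r₂)) := by
  have hgrowth : ∀ {c r lam : ℝ}, ENNReal.ofReal (c * lam ^ r) ≤ ψ lam →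
      expNeg (ENNReal.ofReal s * ψ lam) ≤ ENNReal.ofReal (Real.exp (-(s * c) * lam ^ r)) := by
    intro c r lam h
    rw [neg_mul]
    refine expNeg_le_of_ofReal_le ?_
    rw [mul_assoc, ENNReal.ofReal_mul hs.le]
    gcongr
  have hpointwise : ∀ lam ∈ Ioi (0 : ℝ),
      ENNReal.ofReal (lam ^ (p - 1)) * expNeg (ENNReal.ofReal s * ψ lam) ≤
        ENNReal.ofReal (lam ^ (p - 1) * Real.exp (-(s * a) * lam ^ r₁)) +
          ENNReal.ofReal (lam ^ (p - 1) * Real.exp (-(s * b) * lam ^ r₂)) := by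
    intro lam hlam
    have hpow : 0 ≤ lam ^ (p - 1) := Real.rpow_nonneg (le_of_lt hlam) _
    rw [ENNReal.ofReal_mul hpow, ENNReal.ofReal_mul hpow, ← mul_add]
    gcongr
    rcases hψ lam hlam with h | h
    · exact le_add_right (hgrowth h)
    · exact le_add_left (hgrowth h)
  have hΓ₁ := Real.Gamma_pos_of_pos (div_pos hp hr₁)
  have hΓ₂ := Real.Gamma_pos_of_pos (div_pos hp hr₂)
  calc _ ≤ _ := setLIntegral_mono' measurableSet_Ioi hpointwise
    _ = _ := lintegral_add_left (by fun_prop) _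
    _ = _ := by
      rw [lintegral_rpow_sub_one_mul_exp_neg_mul_rpow hp hr₁ (by positivity),
        lintegral_rpow_sub_one_mul_exp_neg_mul_rpow hp hr₂ (by positivity),
        ← ENNReal.ofReal_add (by positivity) (by positivity)]

section LaplaceExponent

variable {α : Type*} [MeasurableSpace α] (μ : Measure α) (f : α → ℝ)

/-- For `f u = |u|³` and `μ = ν` restricted to `{|u| ≤ ε}`, this is the `ψ` with
`E[e^{-λX}] = e^{-(τ-t) ψ(λ)}` for `X = ∫_t^τ ∫_{|u|≤ε} |u|³ N(ds,du)`. -/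
noncomputable def laplaceExponent (lam : ℝ) : ℝ≥0∞ :=
  ∫⁻ u, ENNReal.ofReal (1 - Real.exp (-(lam * f u))) ∂μ

variable {μ f}

lemma laplaceExponent_le_measure_univ (lam : ℝ) : laplaceExponent μ f lam ≤ μ univ := by
  calc laplaceExponent μ f lam ≤ ∫⁻ _, 1 ∂μ := lintegral_mono fun u =>
        ENNReal.ofReal_le_one.2 (by linarith [Real.exp_pos (-(lam * f u))])
    _ = μ univ := lintegral_one

lemma laplaceExponent_restrict_le_add {s t u : Set α} (hst : s ⊆ t ∪ u) (lam : ℝ) :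
    laplaceExponent (μ.restrict s) f lam ≤ laplaceExponent (μ.restrict t) f lam + μ u := by
  calc laplaceExponent (μ.restrict s) f lam
      ≤ laplaceExponent (μ.restrict (t ∪ u)) f lam := lintegral_mono_set hst
    _ ≤ laplaceExponent (μ.restrict t) f lam + laplaceExponent (μ.restrict u) f lam :=
      lintegral_union_le _ _ _
    _ ≤ laplaceExponent (μ.restrict t) f lam + μ u := by
      gcongr
      exact (laplaceExponent_le_measure_univ lam).trans_eq (Measure.restrict_apply_univ u)

lemma ofReal_mul_laplaceExponent_le {θ : ℝ} (hθ0 : 0 ≤ θ) (hθ1 : θ ≤ 1) (lam : ℝ) :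
    ENNReal.ofReal θ * laplaceExponent μ f lam ≤ laplaceExponent μ f (θ * lam) := by
  rw [laplaceExponent, ← lintegral_const_mul' _ _ ENNReal.ofReal_ne_top]
  refine lintegral_mono fun u => ?_
  rw [← ENNReal.ofReal_mul hθ0, mul_assoc]
  exact ENNReal.ofReal_le_ofReal (mul_one_sub_exp_neg_le hθ0 hθ1 _)

lemma ofReal_mul_le_laplaceExponent_of_le {c r Λ lam : ℝ} (hΛ : 0 < Λ) (hlam0 : 0 ≤ lam)
    (hlam : lam ≤ Λ) (hψΛ : ENNReal.ofReal (c * Λ ^ r) ≤ laplaceExponent μ f Λ) :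
    ENNReal.ofReal (c * Λ ^ (r - 1) * lam) ≤ laplaceExponent μ f lam := by
  have hθ0 : 0 ≤ lam / Λ := div_nonneg hlam0 hΛ.le
  calc ENNReal.ofReal (c * Λ ^ (r - 1) * lam)
      = ENNReal.ofReal (lam / Λ) * ENNReal.ofReal (c * Λ ^ r) := by
        rw [← ENNReal.ofReal_mul hθ0, Real.rpow_sub_one hΛ.ne']
        congr 1
        field_simp
    _ ≤ ENNReal.ofReal (lam / Λ) * laplaceExponent μ f Λ := by gcongr
    _ ≤ laplaceExponent μ f (lam / Λ * Λ) :=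
      ofReal_mul_laplaceExponent_le hθ0 ((div_le_one hΛ).2 hlam) Λ
    _ = laplaceExponent μ f lam := by rw [div_mul_cancel₀ _ hΛ.ne']

lemma ofReal_le_laplaceExponent_of_measure_le {s t u : Set α} (hst : s ⊆ t ∪ u)
    {r κ lam₀ Λ lam : ℝ} (hκ : 0 ≤ κ) (hr : 0 ≤ r) (hΛ0 : 0 ≤ Λ) (hΛ : lam₀ < Λ)
    (hlower : ∀ lam : ℝ, lam₀ < lam →
      ENNReal.ofReal (κ / 2 * lam ^ r) ≤ laplaceExponent (μ.restrict s) f lam)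
    (hu : μ u ≤ ENNReal.ofReal (κ / 4 * Λ ^ r)) (hlam : Λ ≤ lam) :
    ENNReal.ofReal (κ / 4 * lam ^ r) ≤ laplaceExponent (μ.restrict t) f lam := by
  have hlam0 : 0 ≤ lam := hΛ0.trans hlam
  have hu' : μ u ≤ ENNReal.ofReal (κ / 4 * lam ^ r) := by
    grw [hu, hlam]
  have h := (hlower lam (hΛ.trans_le hlam)).trans
    ((laplaceExponent_restrict_le_add hst lam).trans (add_le_add le_rfl hu'))
  rw [← tsub_le_iff_right, ← ENNReal.ofReal_sub _ (by positivity)] at h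
  refine le_of_eq_of_le ?_ h
  congr 1
  ring

lemma ofReal_le_laplaceExponent_linear_or_rpow {s t u : Set α} (hst : s ⊆ t ∪ u)
    {r κ lam₀ Λ : ℝ} (hκ : 0 ≤ κ) (hr : 0 ≤ r) (hΛ0 : 0 < Λ) (hΛ : lam₀ < Λ)
    (hlower : ∀ lam : ℝ, lam₀ < lam →
      ENNReal.ofReal (κ / 2 * lam ^ r) ≤ laplaceExponent (μ.restrict s) f lam)
    (hu : μ u ≤ ENNReal.ofReal (κ / 4 * Λ ^ r)) (lam : ℝ) (hlam : 0 < lam) :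
    ENNReal.ofReal (κ / 4 * Λ ^ (r - 1) * lam) ≤ laplaceExponent (μ.restrict t) f lam ∨
      ENNReal.ofReal (κ / 4 * lam ^ r) ≤ laplaceExponent (μ.restrict t) f lam := by
  have hlarge {lam : ℝ} (hΛlam : Λ ≤ lam) :=
    ofReal_le_laplaceExponent_of_measure_le hst hκ hr hΛ0.le hΛ hlower hu hΛlam
  rcases le_or_gt lam Λ with hlamΛ | hΛlam
  · exact .inl (ofReal_mul_le_laplaceExponent_of_le hΛ0 hlam.le hlamΛ (hlarge le_rfl))
  · exact .inr (hlarge hΛlam.le)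

lemma lintegral_rpow_mul_expNeg_laplaceExponent_le {s t u : Set α} (hst : s ⊆ t ∪ u)
    {r κ lam₀ Λ p σ : ℝ} (hκ : 0 < κ) (hr : 0 < r) (hΛ0 : 0 < Λ) (hΛ : lam₀ < Λ) (hp : 0 < p)
    (hσ : 0 < σ)
    (hlower : ∀ lam : ℝ, lam₀ < lam →
      ENNReal.ofReal (κ / 2 * lam ^ r) ≤ laplaceExponent (μ.restrict s) f lam)
    (hu : μ u ≤ ENNReal.ofReal (κ / 4 * Λ ^ r)) :
    ∫⁻ lam in Ioi (0 : ℝ), ENNReal.ofReal (lam ^ (p - 1)) *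
        expNeg (ENNReal.ofReal σ * laplaceExponent (μ.restrict t) f lam) ≤
      ENNReal.ofReal ((σ * (κ / 4 * Λ ^ (r - 1))) ^ (-p) * Real.Gamma p +
        (σ * (κ / 4)) ^ (-(p / r)) * (1 / r) * Real.Gamma (p / r)) := by
  have h := lintegral_rpow_mul_expNeg_le (ψ := laplaceExponent (μ.restrict t) f)
    (a := κ / 4 * Λ ^ (r - 1)) (b := κ / 4) hp hσ (by positivity) (by positivity) one_pos hr
    fun lam hlam => by
      rw [Real.rpow_one]
      exact ofReal_le_laplaceExponent_linear_or_rpow hst hκ.le hr.le hΛ0 hΛ hlower hu lam hlam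
  rwa [div_one, div_one, mul_one] at h

end LaplaceExponent

theorem stmt_8_general (l : ℕ)
    (ν : Measure (EuclideanSpace ℝ (Fin l)))
    (β : ℝ) (hβ : β ∈ Set.Ioo (0 : ℝ) 2)
    (κ lam₀ CL : ℝ) (hκ : 0 < κ)
    (hlower : ∀ lam : ℝ, lam₀ < lam →
      ENNReal.ofReal (κ / 2 * lam ^ (β / 3)) ≤
        ∫⁻ u in {u : EuclideanSpace ℝ (Fin l) | 0 < ‖u‖ ∧ ‖u‖ ≤ 1},
          ENNReal.ofReal (1 - Real.exp (-(lam * ‖u‖ ^ 3))) ∂ν)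
    (htail : ∀ ε ∈ Set.Ioo (0 : ℝ) 1,
      ν {u : EuclideanSpace ℝ (Fin l) | (0 < ‖u‖ ∧ ‖u‖ ≤ 1) ∧ ε < ‖u‖}
        ≤ ENNReal.ofReal (CL * ε ^ (-β))) :
    ∀ p : ℝ, 1 ≤ p → ∃ C : ℝ, 0 < C ∧ ∀ s : ℝ, 0 < s → ∀ ε ∈ Set.Ioo (0 : ℝ) 1,
      (∫⁻ lam in Set.Ioi (0 : ℝ),
          ENNReal.ofReal (lam ^ (p - 1)) *
            expNeg (ENNReal.ofReal s *
              ∫⁻ u in {u : EuclideanSpace ℝ (Fin l) | (0 < ‖u‖ ∧ ‖u‖ ≤ 1) ∧ ‖u‖ ≤ ε},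
                ENNReal.ofReal (1 - Real.exp (-(lam * ‖u‖ ^ 3))) ∂ν))
        ≤ ENNReal.ofReal (C * ((s * ε ^ (3 - β)) ^ (-p) + s ^ (-(3 * p / β)))) := by
  intro p hp
  have hp0 : 0 < p := by linarith
  have hβ0 : 0 < β := hβ.1
  have hr : 0 < β / 3 := by positivity
  have hκ4 : 0 < κ / 4 := by positivity
  obtain ⟨M, hM0, hMlam, hMCL⟩ := exists_gt_and_le_mul_rpow lam₀ CL hκ4 hr
  set A := (κ / 4 * M ^ (β / 3 - 1)) ^ (-p) * Real.Gamma p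
  set B := (κ / 4) ^ (-(3 * p / β)) * (3 / β) * Real.Gamma (3 * p / β)
  have hA : 0 < A := mul_pos (by positivity) (Real.Gamma_pos_of_pos hp0)
  have hB : 0 < B := mul_pos (by positivity) (Real.Gamma_pos_of_pos (by positivity))
  refine ⟨A + B, by positivity, fun s hs ε hε => ?_⟩
  have hε0 : 0 < ε := hε.1
  have hε3 : 1 ≤ ε ^ (-3 : ℝ) :=
    Real.one_le_rpow_of_pos_of_le_one_of_nonpos hε0 hε.2.le (by norm_num)
  set Λ := M * ε ^ (-3 : ℝ)
  have hΛ0 : 0 < Λ := by positivity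
  have hΛ_rpow {r : ℝ} : Λ ^ r = M ^ r * ε ^ (-3 * r) := by
    rw [Real.mul_rpow hM0.le (by positivity), ← Real.rpow_mul hε0.le]
  have hsplit : {u : EuclideanSpace ℝ (Fin l) | 0 < ‖u‖ ∧ ‖u‖ ≤ 1} ⊆
      {u | (0 < ‖u‖ ∧ ‖u‖ ≤ 1) ∧ ‖u‖ ≤ ε} ∪ {u | (0 < ‖u‖ ∧ ‖u‖ ≤ 1) ∧ ε < ‖u‖} :=
    fun u hu => (le_or_gt ‖u‖ ε).imp (⟨hu, ·⟩) (⟨hu, ·⟩)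
  have htail_Λ : _ ≤ ENNReal.ofReal (κ / 4 * Λ ^ (β / 3)) :=
      (htail ε hε).trans <| ENNReal.ofReal_le_ofReal <| by
    rw [hΛ_rpow, ← mul_assoc, show -3 * (β / 3) = -β by ring]
    exact mul_le_mul_of_nonneg_right hMCL (by positivity)
  refine (lintegral_rpow_mul_expNeg_laplaceExponent_le (f := fun u => ‖u‖ ^ 3) hsplit hκ hr hΛ0
    (hMlam.trans_le (le_mul_of_one_le_right hM0.le hε3)) hp0 hs hlower htail_Λ).trans
    (ENNReal.ofReal_le_ofReal ?_)
  rw [hΛ_rpow, show -3 * (β / 3 - 1) = 3 - β by ring,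
    show s * (κ / 4 * (M ^ (β / 3 - 1) * ε ^ (3 - β))) =
      κ / 4 * M ^ (β / 3 - 1) * (s * ε ^ (3 - β)) by ring,
    show s * (κ / 4) = κ / 4 * s by ring, Real.mul_rpow (by positivity) (by positivity),
    Real.mul_rpow hκ4.le hs.le, show p / (β / 3) = 3 * p / β by field_simp,
    show 1 / (β / 3) = 3 / β by field_simp]
  have hX : 0 ≤ (s * ε ^ (3 - β)) ^ (-p) := by positivity
  have hY : 0 ≤ s ^ (-(3 * p / β)) := by positivity
  nlinarith [mul_nonneg hA.le hY, mul_nonneg hB.le hX]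

/-- Let `ν` be a σ-finite measure on `𝒪` with finite third moment,
`β ∈ (0,2)`, `κ, λ₀, C_L > 0`. Assume (i) `∫_𝒪 (1 - e^{-λ‖u‖³}) ν(du) ≥ (κ/2) λ^{β/3}` for
all `λ > λ₀` and (ii) `ν({‖u‖ > ε}) ≤ C_L ε^{-β}` for all `ε ∈ (0,1)`. Then for every
`p ≥ 1` there is `C > 0` such that for all `s > 0`, `ε ∈ (0,1)`,
`∫_0^∞ λ^{p-1} exp(-s ∫_{‖u‖≤ε} (1 - e^{-λ‖u‖³}) ν(du)) dλ ≤ C ((s ε^{3-β})^{-p} + s^{-3p/β})`. -/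
theorem stmt_8 (l : ℕ) (hl : 1 ≤ l)
    (ν : Measure (EuclideanSpace ℝ (Fin l))) [SigmaFinite ν]
    (hsupp : ν {u : EuclideanSpace ℝ (Fin l) | ¬ (0 < ‖u‖ ∧ ‖u‖ ≤ 1)} = 0)
    (hmom : (∫⁻ u in {u : EuclideanSpace ℝ (Fin l) | 0 < ‖u‖ ∧ ‖u‖ ≤ 1},
        ENNReal.ofReal (‖u‖ ^ 3) ∂ν) < ⊤)
    (β : ℝ) (hβ : β ∈ Set.Ioo (0 : ℝ) 2)
    (κ lam₀ CL : ℝ) (hκ : 0 < κ) (hlam₀ : 0 < lam₀) (hCL : 0 < CL)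
    (hlower : ∀ lam : ℝ, lam₀ < lam →
      ENNReal.ofReal (κ / 2 * lam ^ (β / 3)) ≤
        ∫⁻ u in {u : EuclideanSpace ℝ (Fin l) | 0 < ‖u‖ ∧ ‖u‖ ≤ 1},
          ENNReal.ofReal (1 - Real.exp (-(lam * ‖u‖ ^ 3))) ∂ν)
    (htail : ∀ ε ∈ Set.Ioo (0 : ℝ) 1,
      ν {u : EuclideanSpace ℝ (Fin l) | (0 < ‖u‖ ∧ ‖u‖ ≤ 1) ∧ ε < ‖u‖}
        ≤ ENNReal.ofReal (CL * ε ^ (-β))) :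
    ∀ p : ℝ, 1 ≤ p → ∃ C : ℝ, 0 < C ∧ ∀ s : ℝ, 0 < s → ∀ ε ∈ Set.Ioo (0 : ℝ) 1,
      (∫⁻ lam in Set.Ioi (0 : ℝ),
          ENNReal.ofReal (lam ^ (p - 1)) *
            expNeg (ENNReal.ofReal s *
              ∫⁻ u in {u : EuclideanSpace ℝ (Fin l) | (0 < ‖u‖ ∧ ‖u‖ ≤ 1) ∧ ‖u‖ ≤ ε},
                ENNReal.ofReal (1 - Real.exp (-(lam * ‖u‖ ^ 3))) ∂ν))
        ≤ ENNReal.ofReal (C * ((s * ε ^ (3 - β)) ^ (-p) + s ^ (-(3 * p / β)))) :=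
  stmt_8_general l ν β hβ κ lam₀ CL hκ hlower htail
end
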